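/- Let T, μ > 0, f ∈ C⁰([0,T]), and let h, v : [0,T]×[0,1] → ℝ with h > 0 satisfy, with u := ln h, the interior momentum equation v_t = μ v_{xx} + μ u_x v_x + f − v v_x − h_x on [0,T]×(0,1) (equivalent to the viscous Saint-Venant system with L = g = 1). Assume v[0] is four times and h[0], u[0] three times continuously differentiable in x, and v_{tt} is continuous on [0,T]×[0,1]. Let n ≥ 2 be an integer, δx = 1/n, δt ∈ (0,T), set h_i = h(0, iδx), v_i = v(0, iδx), and for i = 1,…,n−1 define v_i⁺ = (1 − 2δtμ/δx²)v_i + (δtμ/δx²)(v_{i+1} + v_{i−1}) + (δtμ/(4δx²))(v_{i+1} − v_{i−1}) ln(h_{i+1}/h_{i−1}) − (δt/(2δx))(v_i(v_{i+1} − v_{i−1}) + h_{i+1} − h_{i−1}) + f(0) δt. Then for all i = 1,…,n−1: |v(δt, iδx) − v_i⁺| ≤ S̄ δt (δx² + δt), where S̄ := (1/2)(max_{0≤s≤T} ‖v_{tt}[s]‖_∞ + ‖v[0]‖_∞ ‖v_{xxx}[0]‖_∞ + ‖h_{xxx}[0]‖_∞) + (μ/2)(‖v_x[0]‖_∞ ‖u_{xxx}[0]‖_∞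 + ‖u_x[0]‖_∞ ‖v_{xxx}[0]‖_∞ + ‖v_{xxxx}[0]‖_∞). -/

import Mathlib

/-!
At `x = i δx`, the momentum equation at `t = 0` and `ln (h₊ / h₋) = u₊ - u₋` split the error as
`v(δt,x) - v⁺ = [v(δt,x) - v(0,x) - δt v_t(0,x)] + δt [E - E_δ]`, where
`E = (μ v_xx + μ u_x v_x - v v_x - h_x)(0,x)` and `E_δ` is `E` with every derivative replaced by
its central difference quotient. The first bracket is a Taylor remainder, at most `½ ‖v_tt‖ δt²`.
In the second, each quotient is `O(δx²)`-close to its derivative, and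
`ab - a'b' = (a - a')b + a'(b - b')` handles `u_x v_x`.

Only one-sided derivatives on closed intervals are available, so every Taylor bound is obtained by
iterating "`g(a) = 0` and `|g'(t)| ≤ C (t - a)ᵏ` imply `|g(t)| ≤ C (t - a)ᵏ⁺¹ / (k + 1)`". For
central differences it is applied to `F(x + s) ± F(x - s)` on `s ∈ [0, δ]`, which avoids
expanding to the left of `x`.
-/

open Set

/-- The explicit finite-difference update of the liquid velocity at interior
mesh points (scheme (6.2)), using the input value `fd = f(0)`. -/
noncomputable def vPlusInterior (δt δx μ fd : ℝ) (hh vv : ℕ → ℝ) (i : ℕ) : ℝ :=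
  (1 - 2 * δt * μ / δx ^ 2) * vv i + δt * μ / δx ^ 2 * (vv (i + 1) + vv (i - 1))
    + δt * μ / (4 * δx ^ 2) * (vv (i + 1) - vv (i - 1)) * Real.log (hh (i + 1) / hh (i - 1))
    - δt / (2 * δx) * (vv i * (vv (i + 1) - vv (i - 1)) + hh (i + 1) - hh (i - 1))
    + fd * δt

/-- Supremum norm over the spatial interval `[0,1]`. -/
noncomputable def supSeg (f : ℝ → ℝ) : ℝ := sSup ((fun x => |f x|) '' Icc (0:ℝ) 1)

/-- Supremum norm over the space-time rectangle `[0,T] × [0,1]`. -/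
noncomputable def supRect (T : ℝ) (f : ℝ → ℝ → ℝ) : ℝ :=
  sSup ((fun p : ℝ × ℝ => |f p.1 p.2|) '' (Icc 0 T ×ˢ Icc (0:ℝ) 1))

theorem abs_le_mul_pow_of_abs_deriv_le {a b C : ℝ} {k : ℕ} {g g' : ℝ → ℝ}
    (hg : ∀ t ∈ Icc a b, HasDerivWithinAt g (g' t) (Icc a b) t) (hga : g a = 0)
    (hg' : ∀ t ∈ Icc a b, |g' t| ≤ C * (t - a) ^ k) :
    ∀ t ∈ Icc a b, |g t| ≤ C / (k + 1) * (t - a) ^ (k + 1) := by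
  have hB (t : ℝ) : HasDerivAt (fun t => C / (k + 1) * (t - a) ^ (k + 1)) (C * (t - a) ^ k) t := by
    refine ((((hasDerivAt_id t).sub_const a).pow (k + 1)).const_mul (C / (k + 1))).congr_deriv ?_
    simp only [id, Nat.cast_add, Nat.cast_one, add_tsub_cancel_right]
    field_simp
  have hg_right (t : ℝ) (ht : t ∈ Ico a b) : HasDerivWithinAt g (g' t) (Ici t) t :=
    (hg t (Ico_subset_Icc_self ht)).mono_of_mem_nhdsWithin <|
      Filter.mem_of_superset (Icc_mem_nhdsGE ht.2) (Icc_subset_Icc_left ht.1)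
  intro t ht
  simpa only [Real.norm_eq_abs] using image_norm_le_of_norm_deriv_right_le_deriv_boundary
    (fun t ht => (hg t ht).continuousWithinAt) hg_right (by simp [hga]) hB
    (fun t ht => by simpa only [Real.norm_eq_abs] using hg' t (Ico_subset_Icc_self ht)) ht

theorem abs_sub_sub_mul_deriv_le {a b M : ℝ} {f f' f'' : ℝ → ℝ}
    (hf : ∀ t ∈ Icc a b, HasDerivWithinAt f (f' t) (Icc a b) t)
    (hf' : ∀ t ∈ Icc a b, HasDerivWithinAt f' (f'' t) (Icc a b) t)
    (hM : ∀ t ∈ Icc a b, |f'' t| ≤ M) :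
    ∀ t ∈ Icc a b, |f t - f a - (t - a) * f' a| ≤ M / 2 * (t - a) ^ 2 := by
  have h1 := abs_le_mul_pow_of_abs_deriv_le (k := 0) (fun t ht => (hf' t ht).sub_const (f' a))
    (sub_self _) (by simpa using hM)
  have h2 := abs_le_mul_pow_of_abs_deriv_le (g := fun t => f t - f a - (t - a) * f' a)
    (fun t ht => ((hf t ht).sub_const (f a)).sub
      (((hasDerivWithinAt_id t _).sub_const a).mul_const (f' a) |>.congr_deriv (one_mul _)))
    (by simp) h1
  intro t ht
  convert h2 t ht using 1
  norm_num

noncomputable def centralDiff (F : ℝ → ℝ) (x δ : ℝ) : ℝ :=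
  (F (x + δ) - F (x - δ)) / (2 * δ)

noncomputable def secondCentralDiff (F : ℝ → ℝ) (x δ : ℝ) : ℝ :=
  (F (x + δ) - 2 * F x + F (x - δ)) / δ ^ 2

section CentralDifferences

variable {F F₁ F₂ F₃ F₄ : ℝ → ℝ} {S : Set ℝ} {x δ M : ℝ}

theorem add_mem_and_sub_mem_of_Icc_subset (hS : Icc (x - δ) (x + δ) ⊆ S) {s : ℝ}
    (hs : s ∈ Icc 0 δ) : x + s ∈ S ∧ x - s ∈ S :=
  ⟨hS ⟨by linarith [hs.1, hs.2], by linarith [hs.1, hs.2]⟩,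
    hS ⟨by linarith [hs.1, hs.2], by linarith [hs.1, hs.2]⟩⟩

theorem hasDerivWithinAt_comp_const_add_Icc (hS : Icc (x - δ) (x + δ) ⊆ S)
    (hF : ∀ y ∈ S, HasDerivWithinAt F (F₁ y) S y) :
    ∀ s ∈ Icc 0 δ, HasDerivWithinAt (fun s => F (x + s)) (F₁ (x + s)) (Icc 0 δ) s := by
  have hmaps : MapsTo (x + ·) (Icc 0 δ) S := fun _ hs =>
    (add_mem_and_sub_mem_of_Icc_subset hS hs).1
  intro s hs
  exact ((hF _ (hmaps hs)).comp s ((hasDerivWithinAt_id s _).const_add x) hmaps).congr_deriv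
    (mul_one _)

theorem hasDerivWithinAt_comp_const_sub_Icc (hS : Icc (x - δ) (x + δ) ⊆ S)
    (hF : ∀ y ∈ S, HasDerivWithinAt F (F₁ y) S y) :
    ∀ s ∈ Icc 0 δ, HasDerivWithinAt (fun s => F (x - s)) (-F₁ (x - s)) (Icc 0 δ) s := by
  have hmaps : MapsTo (x - ·) (Icc 0 δ) S := fun _ hs =>
    (add_mem_and_sub_mem_of_Icc_subset hS hs).2
  intro s hs
  exact ((hF _ (hmaps hs)).comp s ((hasDerivWithinAt_id s _).const_sub x) hmaps).congr_deriv
    (mul_neg_one _)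

theorem abs_comp_add_add_comp_sub_le (hS : Icc (x - δ) (x + δ) ⊆ S) (hM : ∀ y ∈ S, |F y| ≤ M) :
    ∀ s ∈ Icc 0 δ, |F (x + s) + F (x - s)| ≤ 2 * M := fun s hs => by
  obtain ⟨hp, hm⟩ := add_mem_and_sub_mem_of_Icc_subset hS hs
  exact (abs_add_le _ _).trans (two_mul M ▸ add_le_add (hM _ hp) (hM _ hm))

theorem abs_centralDiff_le (hδ : 0 < δ) (hS : Icc (x - δ) (x + δ) ⊆ S)
    (hF : ∀ y ∈ S, HasDerivWithinAt F (F₁ y) S y) (hM : ∀ y ∈ S, |F₁ y| ≤ M) :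
    |centralDiff F x δ| ≤ M := by
  have hg := abs_le_mul_pow_of_abs_deriv_le (k := 0) (C := 2 * M)
    (g := fun s => F (x + s) - F (x - s))
    (fun s hs => (hasDerivWithinAt_comp_const_add_Icc hS hF s hs).sub
      (hasDerivWithinAt_comp_const_sub_Icc hS hF s hs)) (by simp)
    (fun s hs => by simpa using abs_comp_add_add_comp_sub_le hS hM s hs)
    δ ⟨hδ.le, le_rfl⟩
  have h2δ : 0 < 2 * δ := by positivity
  rw [centralDiff, abs_div, abs_of_pos h2δ, div_le_iff₀ h2δ]
  norm_num at hg
  linarith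

theorem abs_centralDiff_sub_le (hδ : 0 < δ) (hS : Icc (x - δ) (x + δ) ⊆ S)
    (hF : ∀ y ∈ S, HasDerivWithinAt F (F₁ y) S y) (hF₁ : ∀ y ∈ S, HasDerivWithinAt F₁ (F₂ y) S y)
    (hF₂ : ∀ y ∈ S, HasDerivWithinAt F₂ (F₃ y) S y) (hM : ∀ y ∈ S, |F₃ y| ≤ M) :
    |centralDiff F x δ - F₁ x| ≤ M * δ ^ 2 / 6 := by
  have h2 := abs_le_mul_pow_of_abs_deriv_le (k := 0) (C := 2 * M)
    (g := fun s => F₂ (x + s) - F₂ (x - s))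
    (fun s hs => (hasDerivWithinAt_comp_const_add_Icc hS hF₂ s hs).sub
      (hasDerivWithinAt_comp_const_sub_Icc hS hF₂ s hs)) (by simp)
    (fun s hs => by simpa using abs_comp_add_add_comp_sub_le hS hM s hs)
  have h1 := abs_le_mul_pow_of_abs_deriv_le (g := fun s => F₁ (x + s) + F₁ (x - s) - 2 * F₁ x)
    (fun s hs => (((hasDerivWithinAt_comp_const_add_Icc hS hF₁ s hs).add
      (hasDerivWithinAt_comp_const_sub_Icc hS hF₁ s hs)).sub_const _).congr_deriv (by ring))
    (by simp; ring) h2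
  have h0 := abs_le_mul_pow_of_abs_deriv_le (g := fun s => F (x + s) - F (x - s) - 2 * s * F₁ x)
    (fun s hs => (((hasDerivWithinAt_comp_const_add_Icc hS hF s hs).sub
      (hasDerivWithinAt_comp_const_sub_Icc hS hF s hs)).sub
      (((hasDerivWithinAt_id s _).const_mul 2).mul_const (F₁ x))).congr_deriv (by simp))
    (by simp) h1 δ ⟨hδ.le, le_rfl⟩
  have h2δ : 0 < 2 * δ := by positivity
  rw [centralDiff, div_sub' h2δ.ne', abs_div, abs_of_pos h2δ, div_le_iff₀ h2δ]
  norm_num at h0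
  linarith

theorem abs_secondCentralDiff_sub_le (hδ : 0 < δ) (hS : Icc (x - δ) (x + δ) ⊆ S)
    (hF : ∀ y ∈ S, HasDerivWithinAt F (F₁ y) S y) (hF₁ : ∀ y ∈ S, HasDerivWithinAt F₁ (F₂ y) S y)
    (hF₂ : ∀ y ∈ S, HasDerivWithinAt F₂ (F₃ y) S y) (hF₃ : ∀ y ∈ S, HasDerivWithinAt F₃ (F₄ y) S y)
    (hM : ∀ y ∈ S, |F₄ y| ≤ M) :
    |secondCentralDiff F x δ - F₂ x| ≤ M * δ ^ 2 / 12 := by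
  have h3 := abs_le_mul_pow_of_abs_deriv_le (k := 0) (C := 2 * M)
    (g := fun s => F₃ (x + s) - F₃ (x - s))
    (fun s hs => (hasDerivWithinAt_comp_const_add_Icc hS hF₃ s hs).sub
      (hasDerivWithinAt_comp_const_sub_Icc hS hF₃ s hs)) (by simp)
    (fun s hs => by simpa using abs_comp_add_add_comp_sub_le hS hM s hs)
  have h2 := abs_le_mul_pow_of_abs_deriv_le (g := fun s => F₂ (x + s) + F₂ (x - s) - 2 * F₂ x)
    (fun s hs => (((hasDerivWithinAt_comp_const_add_Icc hS hF₂ s hs).add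
      (hasDerivWithinAt_comp_const_sub_Icc hS hF₂ s hs)).sub_const _).congr_deriv (by ring))
    (by simp; ring) h3
  have h1 := abs_le_mul_pow_of_abs_deriv_le (g := fun s => F₁ (x + s) - F₁ (x - s) - 2 * s * F₂ x)
    (fun s hs => (((hasDerivWithinAt_comp_const_add_Icc hS hF₁ s hs).sub
      (hasDerivWithinAt_comp_const_sub_Icc hS hF₁ s hs)).sub
      (((hasDerivWithinAt_id s _).const_mul 2).mul_const (F₂ x))).congr_deriv (by simp))
    (by simp) h2
  have h0 := abs_le_mul_pow_of_abs_deriv_le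
    (g := fun s => F (x + s) - 2 * F x + F (x - s) - s ^ 2 * F₂ x)
    (fun s hs => ((((hasDerivWithinAt_comp_const_add_Icc hS hF s hs).sub_const _).add
      (hasDerivWithinAt_comp_const_sub_Icc hS hF s hs)).sub
      (((hasDerivWithinAt_id s _).pow 2).mul_const (F₂ x))).congr_deriv (by simp; ring))
    (by simp; ring) h1 δ ⟨hδ.le, le_rfl⟩
  have hδ2 : 0 < δ ^ 2 := by positivity
  rw [secondCentralDiff, div_sub' hδ2.ne', abs_div, abs_of_pos hδ2, div_le_iff₀ hδ2]
  norm_num at h0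
  linarith

end CentralDifferences

theorem abs_le_supSeg {f : ℝ → ℝ} (hf : ContinuousOn f (Icc 0 1)) :
    ∀ x ∈ Icc (0:ℝ) 1, |f x| ≤ supSeg f := fun x hx =>
  le_csSup (isCompact_Icc.bddAbove_image (continuous_abs.comp_continuousOn hf)) ⟨x, hx, rfl⟩

theorem supSeg_nonneg (f : ℝ → ℝ) : 0 ≤ supSeg f :=
  Real.sSup_nonneg (by rintro _ ⟨x, -, rfl⟩; exact abs_nonneg _)

theorem abs_le_supRect {T : ℝ} {f : ℝ → ℝ → ℝ}
    (hf : ContinuousOn (fun p : ℝ × ℝ => f p.1 p.2) (Icc 0 T ×ˢ Icc (0:ℝ) 1)) :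
    ∀ t ∈ Icc 0 T, ∀ x ∈ Icc (0:ℝ) 1, |f t x| ≤ supRect T f := fun t ht x hx =>
  le_csSup ((isCompact_Icc.prod isCompact_Icc).bddAbove_image
    (continuous_abs.comp_continuousOn hf)) ⟨(t, x), mk_mem_prod ht hx, rfl⟩

theorem abs_momentum_truncation_le {μ x δ : ℝ} (hμ : 0 ≤ μ) (hδ : 0 < δ)
    (hI : Icc (x - δ) (x + δ) ⊆ Icc 0 1) {V V₁ V₂ V₃ V₄ U U₁ U₂ U₃ H H₁ H₂ H₃ : ℝ → ℝ}
    (hV : ∀ y ∈ Icc (0:ℝ) 1, HasDerivWithinAt V (V₁ y) (Icc 0 1) y)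
    (hV₁ : ∀ y ∈ Icc (0:ℝ) 1, HasDerivWithinAt V₁ (V₂ y) (Icc 0 1) y)
    (hV₂ : ∀ y ∈ Icc (0:ℝ) 1, HasDerivWithinAt V₂ (V₃ y) (Icc 0 1) y)
    (hV₃ : ∀ y ∈ Icc (0:ℝ) 1, HasDerivWithinAt V₃ (V₄ y) (Icc 0 1) y)
    (hU : ∀ y ∈ Icc (0:ℝ) 1, HasDerivWithinAt U (U₁ y) (Icc 0 1) y)
    (hU₁ : ∀ y ∈ Icc (0:ℝ) 1, HasDerivWithinAt U₁ (U₂ y) (Icc 0 1) y)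
    (hU₂ : ∀ y ∈ Icc (0:ℝ) 1, HasDerivWithinAt U₂ (U₃ y) (Icc 0 1) y)
    (hH : ∀ y ∈ Icc (0:ℝ) 1, HasDerivWithinAt H (H₁ y) (Icc 0 1) y)
    (hH₁ : ∀ y ∈ Icc (0:ℝ) 1, HasDerivWithinAt H₁ (H₂ y) (Icc 0 1) y)
    (hH₂ : ∀ y ∈ Icc (0:ℝ) 1, HasDerivWithinAt H₂ (H₃ y) (Icc 0 1) y)
    (hV₄c : ContinuousOn V₄ (Icc 0 1)) (hU₃c : ContinuousOn U₃ (Icc 0 1))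
    (hH₃c : ContinuousOn H₃ (Icc 0 1)) :
    |μ * (V₂ x - secondCentralDiff V x δ)
        + μ * (U₁ x * V₁ x - centralDiff U x δ * centralDiff V x δ)
        - V x * (V₁ x - centralDiff V x δ) - (H₁ x - centralDiff H x δ)|
      ≤ (1 / 2 * (supSeg V * supSeg V₃ + supSeg H₃)
        + μ / 2 * (supSeg V₁ * supSeg U₃ + supSeg U₁ * supSeg V₃ + supSeg V₄)) * δ ^ 2 := by
  have hx : x ∈ Icc (0:ℝ) 1 := hI ⟨by linarith, by linarith⟩
  have eV₂ := abs_secondCentralDiff_sub_le hδ hI hV hV₁ hV₂ hV₃ (abs_le_supSeg hV₄c)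
  have eV₁ := abs_centralDiff_sub_le hδ hI hV hV₁ hV₂
    (abs_le_supSeg fun y hy => (hV₃ y hy).continuousWithinAt)
  have eU₁ := abs_centralDiff_sub_le hδ hI hU hU₁ hU₂ (abs_le_supSeg hU₃c)
  have eH₁ := abs_centralDiff_sub_le hδ hI hH hH₁ hH₂ (abs_le_supSeg hH₃c)
  have bU := abs_centralDiff_le hδ hI hU (abs_le_supSeg fun y hy => (hU₁ y hy).continuousWithinAt)
  have bV₁ := abs_le_supSeg (fun y hy => (hV₁ y hy).continuousWithinAt) x hx
  have bV := abs_le_supSeg (fun y hy => (hV y hy).continuousWithinAt) x hx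
  rw [abs_sub_comm] at eV₂ eV₁ eU₁ eH₁
  have hU₃ := supSeg_nonneg U₃
  have hV₃ := supSeg_nonneg V₃
  have hV := supSeg_nonneg V
  have hU₁ := supSeg_nonneg U₁
  calc _ ≤ μ * |V₂ x - secondCentralDiff V x δ|
        + μ * (|U₁ x - centralDiff U x δ| * |V₁ x|
          + |centralDiff U x δ| * |V₁ x - centralDiff V x δ|)
        + |V x| * |V₁ x - centralDiff V x δ| + |H₁ x - centralDiff H x δ| := by
        rw [show U₁ x * V₁ x - centralDiff U x δ * centralDiff V x δ
          = (U₁ x - centralDiff U x δ) * V₁ x + centralDiff U x δ * (V₁ x - centralDiff V x δ)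
          by ring]
        refine (abs_sub _ _).trans (add_le_add ((abs_sub _ _).trans (add_le_add
          ((abs_add_le _ _).trans (add_le_add ?_ ?_)) ?_)) le_rfl)
        · rw [abs_mul, abs_of_nonneg hμ]
        · rw [abs_mul, abs_of_nonneg hμ, ← abs_mul, ← abs_mul]
          exact mul_le_mul_of_nonneg_left (abs_add_le _ _) hμ
        · rw [abs_mul]
    _ ≤ μ * (supSeg V₄ * δ ^ 2 / 12) + μ * (supSeg U₃ * δ ^ 2 / 6 * supSeg V₁
          + supSeg U₁ * (supSeg V₃ * δ ^ 2 / 6))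
        + supSeg V * (supSeg V₃ * δ ^ 2 / 6) + supSeg H₃ * δ ^ 2 / 6 := by gcongr
    _ ≤ _ := by
        have hδ2 := sq_nonneg δ
        have hP := add_nonneg (mul_nonneg hV hV₃) (supSeg_nonneg H₃)
        have hQ := mul_nonneg hμ
          (add_nonneg (mul_nonneg (supSeg_nonneg V₁) hU₃) (mul_nonneg hU₁ hV₃))
        have hR := mul_nonneg hμ (supSeg_nonneg V₄)
        linarith [mul_nonneg hδ2 hP, mul_nonneg hδ2 hQ, mul_nonneg hδ2 hR]

theorem vPlusInterior_eq {δt δx μ fd : ℝ} {H V : ℝ → ℝ} {i : ℕ} (hi : 1 ≤ i) (hδx : δx ≠ 0)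
    (hHr : 0 < H (i * δx + δx)) (hHl : 0 < H (i * δx - δx)) :
    vPlusInterior δt δx μ fd (fun j => H (j * δx)) (fun j => V (j * δx)) i
      = V (i * δx) + δt * (μ * secondCentralDiff V (i * δx) δx
        + μ * centralDiff (fun y => Real.log (H y)) (i * δx) δx * centralDiff V (i * δx) δx
        + fd - V (i * δx) * centralDiff V (i * δx) δx - centralDiff H (i * δx) δx) := by
  have hr : ((i + 1 : ℕ) : ℝ) * δx = i * δx + δx := by push_cast; ring
  have hl : ((i - 1 : ℕ) : ℝ) * δx = i * δx - δx := by rw [Nat.cast_sub hi]; push_cast; ring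
  simp only [vPlusInterior, secondCentralDiff, centralDiff, hr, hl,
    Real.log_div hHr.ne' hHl.ne']
  field_simp
  ring

theorem Icc_sub_add_subset_Icc_zero_one {n i : ℕ} (hi₁ : 1 ≤ i) (hi₂ : i ≤ n - 1) :
    Icc (i * ((1:ℝ) / n) - 1 / n) (i * ((1:ℝ) / n) + 1 / n) ⊆ Icc 0 1 := by
  have hn : (i : ℝ) + 1 ≤ n := by exact_mod_cast (by omega : i + 1 ≤ n)
  have hi : (1:ℝ) ≤ i := by exact_mod_cast hi₁
  have hn₀ : (0:ℝ) < n := by linarith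
  apply Icc_subset_Icc <;> field_simp <;> linarith

theorem abs_add_mul_le {a b A K δt δx : ℝ} (hδt : 0 < δt) (hδx : 0 < δx)
    (ha : |a| ≤ A * δt ^ 2) (hb : |b| ≤ K * δx ^ 2) :
    |a + δt * b| ≤ (A + K) * δt * (δx ^ 2 + δt) := by
  have hA : 0 ≤ A := nonneg_of_mul_nonneg_left ((abs_nonneg a).trans ha) (by positivity)
  have hK : 0 ≤ K := nonneg_of_mul_nonneg_left ((abs_nonneg b).trans hb) (by positivity)
  calc |a + δt * b| ≤ |a| + δt * |b| := by
        rw [← abs_of_pos hδt, ← abs_mul, abs_of_pos hδt]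
        exact abs_add_le _ _
    _ ≤ A * δt ^ 2 + δt * (K * δx ^ 2) := by gcongr
    _ ≤ _ := by
        nlinarith [mul_nonneg (mul_nonneg hA hδt.le) (sq_nonneg δx), mul_nonneg hK (sq_nonneg δt)]

theorem velocity_scheme_consistency_general
    (T μ : ℝ) (hμ : 0 < μ)
    (f : ℝ → ℝ)
    (h v u : ℝ → ℝ → ℝ)
    (hu : ∀ t x, u t x = Real.log (h t x))
    (vt vx vxx vtt ux hx : ℝ → ℝ → ℝ)
    (vxx0 v3 v4 hxx0 h3 uxx0 u3 : ℝ → ℝ)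
    (h_pos : ∀ t ∈ Icc 0 T, ∀ x ∈ Icc (0:ℝ) 1, 0 < h t x)
    (vt_spec : ∀ t ∈ Icc 0 T, ∀ x ∈ Icc (0:ℝ) 1,
      HasDerivWithinAt (fun s => v s x) (vt t x) (Icc 0 T) t)
    (vtt_spec : ∀ t ∈ Icc 0 T, ∀ x ∈ Icc (0:ℝ) 1,
      HasDerivWithinAt (fun s => vt s x) (vtt t x) (Icc 0 T) t)
    (vx_spec : ∀ t ∈ Icc 0 T, ∀ x ∈ Icc (0:ℝ) 1,
      HasDerivWithinAt (fun y => v t y) (vx t x) (Icc 0 1) x)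
    (vxx_spec : ∀ t ∈ Icc 0 T, ∀ x ∈ Icc (0:ℝ) 1,
      HasDerivWithinAt (fun y => vx t y) (vxx t x) (Icc 0 1) x)
    (ux_spec : ∀ t ∈ Icc 0 T, ∀ x ∈ Icc (0:ℝ) 1,
      HasDerivWithinAt (fun y => u t y) (ux t x) (Icc 0 1) x)
    (hx_spec : ∀ t ∈ Icc 0 T, ∀ x ∈ Icc (0:ℝ) 1,
      HasDerivWithinAt (fun y => h t y) (hx t x) (Icc 0 1) x)
    (vxx0_spec : ∀ x ∈ Icc (0:ℝ) 1, HasDerivWithinAt (fun y => vx 0 y) (vxx0 x) (Icc 0 1) x)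
    (v3_spec : ∀ x ∈ Icc (0:ℝ) 1, HasDerivWithinAt vxx0 (v3 x) (Icc 0 1) x)
    (v4_spec : ∀ x ∈ Icc (0:ℝ) 1, HasDerivWithinAt v3 (v4 x) (Icc 0 1) x)
    (hxx0_spec : ∀ x ∈ Icc (0:ℝ) 1, HasDerivWithinAt (fun y => hx 0 y) (hxx0 x) (Icc 0 1) x)
    (h3_spec : ∀ x ∈ Icc (0:ℝ) 1, HasDerivWithinAt hxx0 (h3 x) (Icc 0 1) x)
    (uxx0_spec : ∀ x ∈ Icc (0:ℝ) 1, HasDerivWithinAt (fun y => ux 0 y) (uxx0 x) (Icc 0 1) x)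
    (u3_spec : ∀ x ∈ Icc (0:ℝ) 1, HasDerivWithinAt uxx0 (u3 x) (Icc 0 1) x)
    (vtt_cont : ContinuousOn (fun p : ℝ × ℝ => vtt p.1 p.2) (Icc 0 T ×ˢ Icc (0:ℝ) 1))
    (v4_cont : ContinuousOn v4 (Icc (0:ℝ) 1))
    (h3_cont : ContinuousOn h3 (Icc (0:ℝ) 1))
    (u3_cont : ContinuousOn u3 (Icc (0:ℝ) 1))
    (pde : ∀ t ∈ Icc 0 T, ∀ x ∈ Ioo (0:ℝ) 1,
      vt t x = μ * vxx t x + μ * ux t x * vx t x + f t - v t x * vx t x - hx t x)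
    (n : ℕ) (δt : ℝ) (hδt : δt ∈ Ioo 0 T) :
    ∀ i, 1 ≤ i → i ≤ n - 1 →
      |v δt (i * ((1:ℝ) / n))
        - vPlusInterior δt ((1:ℝ) / n) μ (f 0)
            (fun j => h 0 (j * ((1:ℝ) / n))) (fun j => v 0 (j * ((1:ℝ) / n))) i| ≤
      (1 / 2 * (supRect T vtt + supSeg (v 0) * supSeg v3 + supSeg h3)
        + μ / 2 * (supSeg (vx 0) * supSeg u3 + supSeg (ux 0) * supSeg v3 + supSeg v4))
        * δt * (((1:ℝ) / n) ^ 2 + δt) := by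
  intro i hi₁ hi₂
  set δx : ℝ := 1 / n
  set x : ℝ := i * δx
  have hδx : 0 < δx := one_div_pos.2 (by exact_mod_cast (by omega : 0 < n))
  have hI : Icc (x - δx) (x + δx) ⊆ Icc 0 1 := Icc_sub_add_subset_Icc_zero_one hi₁ hi₂
  have hxr := hI ⟨by linarith, le_rfl⟩
  have hxl := hI ⟨le_rfl, by linarith⟩
  have hxIoo : x ∈ Ioo (0:ℝ) 1 := ⟨by linarith [hxl.1], by linarith [hxr.2]⟩
  have hxIcc := Ioo_subset_Icc_self hxIoo
  have h0T : (0:ℝ) ∈ Icc 0 T := ⟨le_rfl, hδt.1.le.trans hδt.2.le⟩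
  have hsub : Icc 0 δt ⊆ Icc 0 T := Icc_subset_Icc_right hδt.2.le
  have htime : |v δt x - v 0 x - δt * vt 0 x| ≤ supRect T vtt / 2 * δt ^ 2 := by
    simpa using abs_sub_sub_mul_deriv_le
      (fun s hs => (vt_spec s (hsub hs) x hxIcc).mono hsub)
      (fun s hs => (vtt_spec s (hsub hs) x hxIcc).mono hsub)
      (fun s hs => abs_le_supRect vtt_cont s (hsub hs) x hxIcc) δt (right_mem_Icc.2 hδt.1.le)
  have hspace := abs_momentum_truncation_le (V := v 0) (U := u 0) (H := h 0) hμ.le hδx hI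
    (vx_spec 0 h0T) vxx0_spec v3_spec v4_spec (ux_spec 0 h0T) uxx0_spec u3_spec
    (hx_spec 0 h0T) hxx0_spec h3_spec v4_cont u3_cont h3_cont
  have hvxx : vxx 0 x = vxx0 x := (uniqueDiffOn_Icc zero_lt_one x hxIcc).eq_deriv _
    (vxx_spec 0 h0T x hxIcc) (vxx0_spec x hxIcc)
  rw [pde 0 h0T x hxIoo, hvxx] at htime
  rw [show u 0 = fun y => Real.log (h 0 y) from funext (hu 0)] at hspace
  rw [vPlusInterior_eq hi₁ hδx.ne' (h_pos 0 h0T _ hxr) (h_pos 0 h0T _ hxl)]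
  convert abs_add_mul_le hδt.1 hδx htime hspace using 2 <;> ring

/-- one-step consistency of the interior liquid-velocity scheme
for the momentum equation `v_t = μ v_xx + μ u_x v_x + f − v v_x − h_x`
(with `u = ln h`, i.e. the viscous Saint-Venant system with `L = g = 1`).
Here `vt, vx, vxx, vtt, ux, hx` denote the corresponding partial derivatives
(one-sided at the boundary of `[0,T] × [0,1]`), while `v3, v4` are the third
and fourth spatial derivatives of `v(0,·)`, `h3` the third spatial derivative
of `h(0,·)` and `u3` the third spatial derivative of `u(0,·)`. -/
theorem velocity_scheme_consistency
    (T μ : ℝ) (hT : 0 < T) (hμ : 0 < μ)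
    (f : ℝ → ℝ) (f_cont : ContinuousOn f (Icc 0 T))
    (h v u : ℝ → ℝ → ℝ)
    (hu : ∀ t x, u t x = Real.log (h t x))
    (vt vx vxx vtt ux hx : ℝ → ℝ → ℝ)
    (vxx0 v3 v4 hxx0 h3 uxx0 u3 : ℝ → ℝ)
    (h_pos : ∀ t ∈ Icc 0 T, ∀ x ∈ Icc (0:ℝ) 1, 0 < h t x)
    (vt_spec : ∀ t ∈ Icc 0 T, ∀ x ∈ Icc (0:ℝ) 1,
      HasDerivWithinAt (fun s => v s x) (vt t x) (Icc 0 T) t)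
    (vtt_spec : ∀ t ∈ Icc 0 T, ∀ x ∈ Icc (0:ℝ) 1,
      HasDerivWithinAt (fun s => vt s x) (vtt t x) (Icc 0 T) t)
    (vx_spec : ∀ t ∈ Icc 0 T, ∀ x ∈ Icc (0:ℝ) 1,
      HasDerivWithinAt (fun y => v t y) (vx t x) (Icc 0 1) x)
    (vxx_spec : ∀ t ∈ Icc 0 T, ∀ x ∈ Icc (0:ℝ) 1,
      HasDerivWithinAt (fun y => vx t y) (vxx t x) (Icc 0 1) x)
    (ux_spec : ∀ t ∈ Icc 0 T, ∀ x ∈ Icc (0:ℝ) 1,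
      HasDerivWithinAt (fun y => u t y) (ux t x) (Icc 0 1) x)
    (hx_spec : ∀ t ∈ Icc 0 T, ∀ x ∈ Icc (0:ℝ) 1,
      HasDerivWithinAt (fun y => h t y) (hx t x) (Icc 0 1) x)
    (vxx0_spec : ∀ x ∈ Icc (0:ℝ) 1, HasDerivWithinAt (fun y => vx 0 y) (vxx0 x) (Icc 0 1) x)
    (v3_spec : ∀ x ∈ Icc (0:ℝ) 1, HasDerivWithinAt vxx0 (v3 x) (Icc 0 1) x)
    (v4_spec : ∀ x ∈ Icc (0:ℝ) 1, HasDerivWithinAt v3 (v4 x) (Icc 0 1) x)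
    (hxx0_spec : ∀ x ∈ Icc (0:ℝ) 1, HasDerivWithinAt (fun y => hx 0 y) (hxx0 x) (Icc 0 1) x)
    (h3_spec : ∀ x ∈ Icc (0:ℝ) 1, HasDerivWithinAt hxx0 (h3 x) (Icc 0 1) x)
    (uxx0_spec : ∀ x ∈ Icc (0:ℝ) 1, HasDerivWithinAt (fun y => ux 0 y) (uxx0 x) (Icc 0 1) x)
    (u3_spec : ∀ x ∈ Icc (0:ℝ) 1, HasDerivWithinAt uxx0 (u3 x) (Icc 0 1) x)
    (v_cont : ContinuousOn (fun p : ℝ × ℝ => v p.1 p.2) (Icc 0 T ×ˢ Icc (0:ℝ) 1))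
    (vtt_cont : ContinuousOn (fun p : ℝ × ℝ => vtt p.1 p.2) (Icc 0 T ×ˢ Icc (0:ℝ) 1))
    (v3_cont : ContinuousOn v3 (Icc (0:ℝ) 1))
    (v4_cont : ContinuousOn v4 (Icc (0:ℝ) 1))
    (h3_cont : ContinuousOn h3 (Icc (0:ℝ) 1))
    (u3_cont : ContinuousOn u3 (Icc (0:ℝ) 1))
    (pde : ∀ t ∈ Icc 0 T, ∀ x ∈ Ioo (0:ℝ) 1,
      vt t x = μ * vxx t x + μ * ux t x * vx t x + f t - v t x * vx t x - hx t x)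
    (n : ℕ) (hn : 2 ≤ n) (δt : ℝ) (hδt : δt ∈ Ioo 0 T) :
    ∀ i, 1 ≤ i → i ≤ n - 1 →
      |v δt (i * ((1:ℝ) / n))
        - vPlusInterior δt ((1:ℝ) / n) μ (f 0)
            (fun j => h 0 (j * ((1:ℝ) / n))) (fun j => v 0 (j * ((1:ℝ) / n))) i| ≤
      (1 / 2 * (supRect T vtt + supSeg (v 0) * supSeg v3 + supSeg h3)
        + μ / 2 * (supSeg (vx 0) * supSeg u3 + supSeg (ux 0) * supSeg v3 + supSeg v4))
        * δt * (((1:ℝ) / n) ^ 2 + δt) :=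
  velocity_scheme_consistency_general T μ hμ f h v u hu vt vx vxx vtt ux hx vxx0 v3 v4 hxx0 h3 uxx0
    u3 h_pos vt_spec vtt_spec vx_spec vxx_spec ux_spec hx_spec vxx0_spec v3_spec v4_spec hxx0_spec
    h3_spec uxx0_spec u3_spec vtt_cont v4_cont h3_cont u3_cont pde n δt hδt
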